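/- arXiv:1610.07597 — 2 statements merged into one kernel-verified Lean document; each statement's English description precedes it below -/
import Mathlib

section
/- Uniform Gronwall Lemma: Let f, g, h be nonnegative locally integrable functions on (t₀, ∞) such that f is absolutely continuous with f'(t) ≤ g(t)f(t) + h(t) for all t ≥ t₀, and suppose there exist positive constants r, a₁, a₂, a₃ such that for all t ≥ t₀, ∫_t^{t+r} f ≤ a₁, ∫_t^{t+r} g ≤ a₂, ∫_t^{t+r} h ≤ a₃. Then f(t + r) ≤ (a₁/r + a₃)·e^{a₂} for all t ≥ t₀. -/
/-!
Fix `t ≥ t₀`. By the mean value theorem for integrals, `f` takes the value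
`(∫ f over [t, t + r]) / r ≤ a₁ / r` at some `s ∈ [t, t + r]`. On `[s, t + r]` the differential
inequality integrates to `f u ≤ f s + a₃ + ∫ₛᵘ g f`, and Grönwall's inequality with the merely
integrable kernel `g` gives `f (t + r) ≤ (f s + a₃) exp (∫ₛ^{t+r} g) ≤ (a₁ / r + a₃) exp a₂`.
Grönwall's inequality itself is proved with the integrating factor `exp (-∫ g)`: it is
absolutely continuous, so the fundamental theorem of calculus for absolutely continuous functions
applies to `(c + ∫ g f) exp (-∫ g)`, whose derivative is a.e. nonpositive.
-/

open MeasureTheory intervalIntegral Set Filter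

theorem LipschitzOnWith.comp_absolutelyContinuousOnInterval {X Y : Type*} [PseudoMetricSpace X]
    [PseudoMetricSpace Y] {φ : X → Y} {K : NNReal} {f : ℝ → X} {a b : ℝ}
    (hφ : LipschitzOnWith K φ (f '' uIcc a b)) (hf : AbsolutelyContinuousOnInterval f a b) :
    AbsolutelyContinuousOnInterval (φ ∘ f) a b := by
  have hK := Filter.Tendsto.const_mul (K : ℝ) hf
  rw [mul_zero] at hK
  refine squeeze_zero' (Eventually.of_forall fun _ ↦ Finset.sum_nonneg fun _ _ ↦ dist_nonneg) ?_ hK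
  filter_upwards [mem_inf_of_right (mem_principal_self _)] with E hE
  rw [Finset.mul_sum]
  gcongr with i hi
  exact hφ.dist_le_mul _ (mem_image_of_mem f (hE.1 i hi).1) _ (mem_image_of_mem f (hE.1 i hi).2)

theorem LocallyLipschitz.comp_absolutelyContinuousOnInterval {E Y : Type*}
    [SeminormedAddCommGroup E] [PseudoMetricSpace Y] {φ : E → Y} {f : ℝ → E} {a b : ℝ}
    (hφ : LocallyLipschitz φ) (hf : AbsolutelyContinuousOnInterval f a b) :
    AbsolutelyContinuousOnInterval (φ ∘ f) a b := by
  obtain ⟨K, hK⟩ := LocallyLipschitzOn.exists_lipschitzOnWith_of_compact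
    (isCompact_uIcc.image_of_continuousOn hf.continuousOn) hφ.locallyLipschitzOn
  exact hK.comp_absolutelyContinuousOnInterval hf

theorem AbsolutelyContinuousOnInterval.le_of_ae_deriv_nonpos {f : ℝ → ℝ} {a b : ℝ}
    (hf : AbsolutelyContinuousOnInterval f a b) (hab : a ≤ b)
    (hf' : ∀ᵐ x, x ∈ Ioc a b → deriv f x ≤ 0) : f b ≤ f a := by
  have h : ∫ x in a..b, deriv f x ≤ 0 := by
    rw [integral_of_le hab]
    exact setIntegral_nonpos_ae measurableSet_Ioc hf'
  linarith [hf.integral_deriv_eq_sub]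

theorem le_mul_exp_integral_of_le_add_integral_mul {f g : ℝ → ℝ} {a b c : ℝ} (hab : a ≤ b)
    (hf : ContinuousOn f (Icc a b)) (hg : IntervalIntegrable g volume a b)
    (hg₀ : ∀ x ∈ Ioc a b, 0 ≤ g x) (hle : ∀ x ∈ Icc a b, f x ≤ c + ∫ y in a..x, g y * f y) :
    f b ≤ c * Real.exp (∫ x in a..b, g x) := by
  set G : ℝ → ℝ := fun x ↦ ∫ y in a..x, g y
  set Φ : ℝ → ℝ := fun x ↦ c + ∫ y in a..x, g y * f y
  have hgf : IntervalIntegrable (fun y ↦ g y * f y) volume a b :=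
    hg.mul_continuousOn (by rwa [uIcc_of_le hab])
  have hΦ : AbsolutelyContinuousOnInterval Φ a b :=
    (LipschitzWith.const c).lipschitzOnWith.absolutelyContinuousOnInterval.add
      (hgf.absolutelyContinuousOnInterval_intervalIntegral left_mem_uIcc)
  have hE : AbsolutelyContinuousOnInterval (fun x ↦ Real.exp (-G x)) a b :=
    Real.contDiff_exp.locallyLipschitz.comp_absolutelyContinuousOnInterval
      (hg.absolutelyContinuousOnInterval_intervalIntegral left_mem_uIcc).neg
  -- `Φ · exp (-G)` is nonincreasing: its derivative `g (f - Φ) exp (-G)` is a.e. nonpositive.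
  have hΨ : Φ b * Real.exp (-G b) ≤ Φ a * Real.exp (-G a) := by
    refine (hΦ.fun_mul hE).le_of_ae_deriv_nonpos hab ?_
    filter_upwards [hgf.ae_hasDerivAt_integral, hg.ae_hasDerivAt_integral] with x hΦ' hG' hx
    have hx' : x ∈ uIcc a b := uIcc_of_le hab ▸ Ioc_subset_Icc_self hx
    have hd : HasDerivAt (fun y ↦ Φ y * Real.exp (-G y))
        (g x * f x * Real.exp (-G x) + Φ x * (Real.exp (-G x) * -g x)) x :=
      ((hΦ' hx' a left_mem_uIcc).const_add c).mul (hG' hx' a left_mem_uIcc).neg.exp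
    rw [hd.deriv]
    have : g x * (f x - Φ x) * Real.exp (-G x) ≤ 0 :=
      mul_nonpos_of_nonpos_of_nonneg
        (mul_nonpos_of_nonneg_of_nonpos (hg₀ x hx) (sub_nonpos.2 (hle x (Ioc_subset_Icc_self hx))))
        (Real.exp_pos _).le
    linarith
  calc f b ≤ Φ b := hle b (right_mem_Icc.2 hab)
    _ = Φ b * Real.exp (-G b) * Real.exp (G b) := by rw [mul_assoc, ← Real.exp_add]; simp
    _ ≤ c * Real.exp (G b) := by
      gcongr
      simpa [Φ, G] using hΨ

theorem le_mul_exp_integral_of_hasDerivAt_le {f f' g h : ℝ → ℝ} {a b : ℝ} (hab : a ≤ b)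
    (hf : ContinuousOn f (Icc a b)) (hf' : ∀ x ∈ Ioo a b, HasDerivAt f (f' x) x)
    (hle : ∀ x ∈ Ioo a b, f' x ≤ g x * f x + h x)
    (hg : IntervalIntegrable g volume a b) (hg₀ : ∀ x ∈ Ioc a b, 0 ≤ g x)
    (hh : IntervalIntegrable h volume a b) (hh₀ : ∀ x ∈ Ioc a b, 0 ≤ h x) :
    f b ≤ (f a + ∫ x in a..b, h x) * Real.exp (∫ x in a..b, g x) := by
  refine le_mul_exp_integral_of_le_add_integral_mul hab hf hg hg₀ fun u hu ↦ ?_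
  have hsub : uIcc a u ⊆ uIcc a b := uIcc_subset_uIcc_left (uIcc_of_le hab ▸ hu)
  have hgf : IntervalIntegrable (fun y ↦ g y * f y) volume a u :=
    (hg.mono_set hsub).mul_continuousOn (hf.mono (uIcc_of_le hu.1 ▸ Icc_subset_Icc_right hu.2))
  have hhu : IntervalIntegrable h volume a u := hh.mono_set hsub
  have hftc : f u - f a ≤ ∫ x in a..u, (g x * f x + h x) :=
    sub_le_integral_of_hasDeriv_right_of_le hu.1 (hf.mono (Icc_subset_Icc_right hu.2))
      (fun x hx ↦ (hf' x ⟨hx.1, hx.2.trans_le hu.2⟩).hasDerivWithinAt)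
      ((intervalIntegrable_iff_integrableOn_Icc_of_le hu.1).1 (hgf.add hhu))
      (fun x hx ↦ hle x ⟨hx.1, hx.2.trans_le hu.2⟩)
  have hhb : ∫ x in a..u, h x ≤ ∫ x in a..b, h x :=
    integral_mono_interval le_rfl hu.1 hu.2 (ae_restrict_of_forall_mem measurableSet_Ioc hh₀) hh
  rw [integral_add hgf hhu] at hftc
  linarith

theorem uniform_gronwall_general (t₀ r a₁ a₂ a₃ : ℝ) (f g h f' : ℝ → ℝ)
    (hr : 0 < r) (ha₁ : 0 < a₁) (ha₃ : 0 < a₃)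
    (hg_nn : ∀ t, t₀ ≤ t → 0 ≤ g t)
    (hh_nn : ∀ t, t₀ ≤ t → 0 ≤ h t)
    (hg_int : ∀ t, t₀ ≤ t → IntervalIntegrable g volume t (t + r))
    (hh_int : ∀ t, t₀ ≤ t → IntervalIntegrable h volume t (t + r))
    (hf_deriv : ∀ t, t₀ ≤ t → HasDerivAt f (f' t) t)
    (hineq : ∀ t, t₀ ≤ t → f' t ≤ g t * f t + h t)
    (hIf : ∀ t, t₀ ≤ t → (∫ s in t..t + r, f s) ≤ a₁)
    (hIg : ∀ t, t₀ ≤ t → (∫ s in t..t + r, g s) ≤ a₂)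
    (hIh : ∀ t, t₀ ≤ t → (∫ s in t..t + r, h s) ≤ a₃) :
    ∀ t, t₀ ≤ t → f (t + r) ≤ (a₁ / r + a₃) * Real.exp a₂ := by
  intro t ht
  have htr : t ≤ t + r := by linarith
  have hf : ContinuousOn f (Icc t (t + r)) :=
    fun x hx ↦ (hf_deriv x (ht.trans hx.1)).continuousAt.continuousWithinAt
  obtain ⟨s, hs, hfs⟩ := exists_eq_interval_average (by linarith : t ≠ t + r)
    (by rwa [uIcc_of_le htr])
  rw [uIoo_of_le htr] at hs
  have hts : t₀ ≤ s := ht.trans hs.1.le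
  have hfs_le : f s ≤ a₁ / r := by
    rw [hfs, interval_average_eq_div, add_sub_cancel_left]
    exact div_le_div_of_nonneg_right (hIf t ht) hr.le
  have htail : ∀ φ : ℝ → ℝ, (∀ x, t₀ ≤ x → 0 ≤ φ x) → IntervalIntegrable φ volume t (t + r) →
      ∫ x in s..t + r, φ x ≤ ∫ x in t..t + r, φ x := fun φ hφ hφi ↦
    integral_mono_interval hs.1.le hs.2.le le_rfl
      (ae_restrict_of_forall_mem measurableSet_Ioc fun x hx ↦ hφ x (ht.trans hx.1.le)) hφi
  have hsub : uIcc s (t + r) ⊆ uIcc t (t + r) :=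
    uIcc_subset_uIcc_right (uIcc_of_le htr ▸ Ioo_subset_Icc_self hs)
  have hgron := le_mul_exp_integral_of_hasDerivAt_le hs.2.le
    (hf.mono (Icc_subset_Icc_left hs.1.le))
    (fun x hx ↦ hf_deriv x (hts.trans hx.1.le)) (fun x hx ↦ hineq x (hts.trans hx.1.le))
    ((hg_int t ht).mono_set hsub) (fun x hx ↦ hg_nn x (hts.trans hx.1.le))
    ((hh_int t ht).mono_set hsub) (fun x hx ↦ hh_nn x (hts.trans hx.1.le))
  calc f (t + r) ≤ (f s + ∫ x in s..t + r, h x) * Real.exp (∫ x in s..t + r, g x) := hgron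
    _ ≤ (a₁ / r + a₃) * Real.exp a₂ := by
      have hH_le : ∫ x in s..t + r, h x ≤ a₃ := (htail h hh_nn (hh_int t ht)).trans (hIh t ht)
      have hG_le : ∫ x in s..t + r, g x ≤ a₂ := (htail g hg_nn (hg_int t ht)).trans (hIg t ht)
      gcongr

/-- **Uniform Gronwall Lemma.** -/
theorem uniform_gronwall (t₀ r a₁ a₂ a₃ : ℝ) (f g h f' : ℝ → ℝ)
    (hr : 0 < r) (ha₁ : 0 < a₁) (ha₂ : 0 < a₂) (ha₃ : 0 < a₃)
    (hf_nn : ∀ t, t₀ ≤ t → 0 ≤ f t)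
    (hg_nn : ∀ t, t₀ ≤ t → 0 ≤ g t)
    (hh_nn : ∀ t, t₀ ≤ t → 0 ≤ h t)
    (hf_int : ∀ t, t₀ ≤ t → IntervalIntegrable f volume t (t + r))
    (hg_int : ∀ t, t₀ ≤ t → IntervalIntegrable g volume t (t + r))
    (hh_int : ∀ t, t₀ ≤ t → IntervalIntegrable h volume t (t + r))
    (hf_deriv : ∀ t, t₀ ≤ t → HasDerivAt f (f' t) t)
    (hineq : ∀ t, t₀ ≤ t → f' t ≤ g t * f t + h t)
    (hIf : ∀ t, t₀ ≤ t → (∫ s in t..t + r, f s) ≤ a₁)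
    (hIg : ∀ t, t₀ ≤ t → (∫ s in t..t + r, g s) ≤ a₂)
    (hIh : ∀ t, t₀ ≤ t → (∫ s in t..t + r, h s) ≤ a₃) :
    ∀ t, t₀ ≤ t → f (t + r) ≤ (a₁ / r + a₃) * Real.exp a₂ :=
  uniform_gronwall_general t₀ r a₁ a₂ a₃ f g h f' hr ha₁ ha₃ hg_nn hh_nn hg_int hh_int hf_deriv
    hineq hIf hIg hIh
end

section
/- Anisotropic trilinear estimate (Lemma 2.5, 1-D vertical model on a product domain): Let Ω = M × (0,1) with M a compact 2-D Riemannian manifold (e.g. S²). For v ∈ H¹ vector fields on Ω, and μ, ν ∈ H¹(Ω), there is a constant c independent of v, μ, ν such that |∫_Ω (∫_ξ¹ div v(·,ξ')dξ') μ ν dΩ| ≤ c |div v|_{L²} |μ|_{L²}^{1/2}(|μ|_{L²}^{1/2} + |∇μ|_{L²}^{1/2}) |ν|_{L²}^{1/2}(|ν|_{L²}^{1/2} + |∇ν|_{L²}^{1/2}). -/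
open MeasureTheory intervalIntegral

/-! A model of the anisotropic estimate (Lemma 2.5) on the product domain
`Ω = M × (0,1)` where `M` is the flat 2-torus (a compact 2-D Riemannian manifold),
realized as 1-periodic smooth functions on `ℝ²`, with integrals over `[0,1]³`. -/

/-- Partial derivative in the first (horizontal) variable. -/
noncomputable def pX (f : ℝ → ℝ → ℝ → ℝ) (x y z : ℝ) : ℝ := deriv (fun x' => f x' y z) x

/-- Partial derivative in the second (horizontal) variable. -/
noncomputable def pY (f : ℝ → ℝ → ℝ → ℝ) (x y z : ℝ) : ℝ := deriv (fun y' => f x y' z) y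

/-- Partial derivative in the vertical variable. -/
noncomputable def pZ (f : ℝ → ℝ → ℝ → ℝ) (x y z : ℝ) : ℝ := deriv (fun z' => f x y z') z

/-- Integral over the fundamental domain `[0,1]² × [0,1]`. -/
noncomputable def I3 (f : ℝ → ℝ → ℝ → ℝ) : ℝ :=
  ∫ x in (0:ℝ)..1, ∫ y in (0:ℝ)..1, ∫ z in (0:ℝ)..1, f x y z

/-- `L²(Ω)` norm. -/
noncomputable def L2 (f : ℝ → ℝ → ℝ → ℝ) : ℝ := Real.sqrt (I3 (fun x y z => (f x y z) ^ 2))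

/-- `L²` norm of the full gradient. -/
noncomputable def gradL2 (f : ℝ → ℝ → ℝ → ℝ) : ℝ :=
  Real.sqrt (I3 (fun x y z => (pX f x y z) ^ 2 + (pY f x y z) ^ 2 + (pZ f x y z) ^ 2))

/-- 1-periodicity in the two horizontal variables. -/
def Per (f : ℝ → ℝ → ℝ → ℝ) : Prop :=
  ∀ x y z, f (x + 1) y z = f x y z ∧ f x (y + 1) z = f x y z

/-- Smoothness on the product domain. -/
def Smooth3 (f : ℝ → ℝ → ℝ → ℝ) : Prop :=
  ContDiff ℝ (⊤ : ℕ∞) (fun p : ℝ × ℝ × ℝ => f p.1 p.2.1 p.2.2)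

open Set

namespace Aniso


lemma icont {f : ℝ → ℝ} (hf : Continuous f) (a b : ℝ) : IntervalIntegrable f volume a b :=
  hf.intervalIntegrable a b

/-- Cauchy–Schwarz for interval integrals of continuous functions on `[0,1]`. -/
lemma cs1 {f g : ℝ → ℝ} (hf : Continuous f) (hg : Continuous g) :
    ∫ t in (0:ℝ)..1, |f t| * |g t| ≤
      Real.sqrt (∫ t in (0:ℝ)..1, f t ^ 2) * Real.sqrt (∫ t in (0:ℝ)..1, g t ^ 2) := by
  set A := ∫ t in (0:ℝ)..1, f t ^ 2 with hA
  set B := ∫ t in (0:ℝ)..1, g t ^ 2 with hB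
  set C := ∫ t in (0:ℝ)..1, |f t| * |g t| with hC
  have hA0 : 0 ≤ A := intervalIntegral.integral_nonneg zero_le_one (fun t _ => sq_nonneg _)
  have hB0 : 0 ≤ B := intervalIntegral.integral_nonneg zero_le_one (fun t _ => sq_nonneg _)
  have hC0 : 0 ≤ C := intervalIntegral.integral_nonneg zero_le_one
    (fun t _ => mul_nonneg (abs_nonneg _) (abs_nonneg _))
  have key : ∀ t : ℝ, 0 ≤ B * (t * t) + (-(2 * C)) * t + A := by
    intro t
    have h1 : ∀ s : ℝ, (t * |g s| - |f s|) ^ 2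
        = t ^ 2 * g s ^ 2 + (-(2 * t)) * (|f s| * |g s|) + f s ^ 2 := by
      intro s
      have e1 : |g s| ^ 2 = g s ^ 2 := sq_abs _
      have e2 : |f s| ^ 2 = f s ^ 2 := sq_abs _
      nlinarith [sq_abs (g s), sq_abs (f s)]
    have h2 : (0:ℝ) ≤ ∫ s in (0:ℝ)..1, (t * |g s| - |f s|) ^ 2 :=
      intervalIntegral.integral_nonneg zero_le_one (fun s _ => sq_nonneg _)
    have h3 : (∫ s in (0:ℝ)..1, (t * |g s| - |f s|) ^ 2)
        = t ^ 2 * B + (-(2 * t)) * C + A := by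
      have heq : (∫ s in (0:ℝ)..1, (t * |g s| - |f s|) ^ 2)
          = ∫ s in (0:ℝ)..1, (t ^ 2 * g s ^ 2 + (-(2 * t)) * (|f s| * |g s|) + f s ^ 2) :=
        intervalIntegral.integral_congr (μ := volume) (fun s _ => h1 s)
      rw [heq]
      rw [intervalIntegral.integral_add (μ := volume) ((show Continuous fun s =>
              t ^ 2 * g s ^ 2 + -(2 * t) * (|f s| * |g s|) from (continuous_const.mul (hg.pow 2)).add
            (continuous_const.mul (hf.abs.mul hg.abs))).intervalIntegrable 0 1)
          ((show Continuous fun s => f s ^ 2 from hf.pow 2).intervalIntegrable 0 1),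
        intervalIntegral.integral_add (μ := volume) ((show Continuous fun s => t ^ 2 * g s ^ 2 from
            continuous_const.mul (hg.pow 2)).intervalIntegrable 0 1)
          ((show Continuous fun s => -(2 * t) * (|f s| * |g s|) from
            continuous_const.mul (hf.abs.mul hg.abs)).intervalIntegrable 0 1),
        intervalIntegral.integral_const_mul, intervalIntegral.integral_const_mul,
        ← hA, ← hB, ← hC]
    nlinarith [h2, h3]
  have hd : discrim B (-(2 * C)) A ≤ 0 := discrim_le_zero key
  have hCsq : C ^ 2 ≤ A * B := by
    rw [discrim] at hd; nlinarith
  calc C = Real.sqrt (C ^ 2) := (Real.sqrt_sq hC0).symm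
    _ ≤ Real.sqrt (A * B) := Real.sqrt_le_sqrt hCsq
    _ = Real.sqrt A * Real.sqrt B := Real.sqrt_mul hA0 B

/-- Monotonicity: integral of a nonneg integrand over a subinterval of `[0,1]`. -/
lemma integral_abs_subinterval {h : ℝ → ℝ} (hh : Continuous h) {a b : ℝ}
    (ha : 0 ≤ a) (hab : a ≤ b) (hb : b ≤ 1) :
    ∫ t in a..b, |h t| ≤ ∫ t in (0:ℝ)..1, |h t| := by
  have e1 := intervalIntegral.integral_add_adjacent_intervals
    (hh.abs.intervalIntegrable (μ := volume) 0 a) (hh.abs.intervalIntegrable a b)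
  have e2 := intervalIntegral.integral_add_adjacent_intervals
    (hh.abs.intervalIntegrable (μ := volume) 0 b) (hh.abs.intervalIntegrable b 1)
  have n1 : 0 ≤ ∫ t in (0:ℝ)..a, |h t| :=
    intervalIntegral.integral_nonneg ha (fun t _ => abs_nonneg _)
  have n2 : 0 ≤ ∫ t in b..1, |h t| :=
    intervalIntegral.integral_nonneg hb (fun t _ => abs_nonneg _)
  linarith

/-- `|∫_{x₀}^{x} h| ≤ ∫_0^1 |h|` for `x₀, x ∈ [0,1]`. -/
lemma abs_integral_between {h : ℝ → ℝ} (hh : Continuous h) {x₀ x : ℝ}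
    (h0 : x₀ ∈ Icc (0:ℝ) 1) (h1 : x ∈ Icc (0:ℝ) 1) :
    |∫ t in x₀..x, h t| ≤ ∫ t in (0:ℝ)..1, |h t| := by
  rcases le_total x₀ x with hle | hle
  · calc |∫ t in x₀..x, h t| ≤ ∫ t in x₀..x, |h t| :=
        intervalIntegral.abs_integral_le_integral_abs hle
      _ ≤ _ := integral_abs_subinterval hh h0.1 hle h1.2
  · rw [intervalIntegral.integral_symm, abs_neg]
    calc |∫ t in x..x₀, h t| ≤ ∫ t in x..x₀, |h t| :=
        intervalIntegral.abs_integral_le_integral_abs hle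
      _ ≤ _ := integral_abs_subinterval hh h1.1 hle h0.2

/-- Fubini: swap two iterated interval integrals of a continuous function. -/
lemma swap2 {f : ℝ → ℝ → ℝ} (hf : Continuous fun p : ℝ × ℝ => f p.1 p.2) :
    (∫ x in (0:ℝ)..1, ∫ y in (0:ℝ)..1, f x y)
      = ∫ y in (0:ℝ)..1, ∫ x in (0:ℝ)..1, f x y := by
  have hint : Integrable (Function.uncurry f)
      ((volume.restrict (Ioc (0:ℝ) 1)).prod (volume.restrict (Ioc (0:ℝ) 1))) := by
    rw [Measure.prod_restrict]
    have hc : IntegrableOn (Function.uncurry f) (Icc (0:ℝ) 1 ×ˢ Icc (0:ℝ) 1)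
        (volume.prod volume) := by
      apply ContinuousOn.integrableOn_compact (isCompact_Icc.prod isCompact_Icc)
      exact hf.continuousOn
    exact hc.mono_set (prod_mono Ioc_subset_Icc_self Ioc_subset_Icc_self)
  rw [intervalIntegral.integral_of_le zero_le_one, intervalIntegral.integral_of_le zero_le_one]
  simp_rw [intervalIntegral.integral_of_le zero_le_one]
  exact MeasureTheory.integral_integral_swap hint

/-- Continuity of a parametric interval integral, curried 2-variable form. -/
lemma cont2 {f : ℝ → ℝ → ℝ} (hf : Continuous fun p : ℝ × ℝ => f p.1 p.2) :
    Continuous fun x => ∫ y in (0:ℝ)..1, f x y :=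
  intervalIntegral.continuous_parametric_intervalIntegral_of_continuous' hf 0 1

/-- Continuity in two parameters of an inner interval integral. -/
lemma cont3 {f : ℝ → ℝ → ℝ → ℝ} (hf : Continuous fun p : ℝ × ℝ × ℝ => f p.1 p.2.1 p.2.2) :
    Continuous fun p : ℝ × ℝ => ∫ z in (0:ℝ)..1, f p.1 p.2 z := by
  apply intervalIntegral.continuous_parametric_intervalIntegral_of_continuous'
    (μ := volume) (f := fun (p : ℝ × ℝ) z => f p.1 p.2 z)
  exact hf.comp ((continuous_fst.comp continuous_fst).prodMk
    ((continuous_snd.comp continuous_fst).prodMk continuous_snd))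



variable {f : ℝ → ℝ → ℝ → ℝ}

lemma Smooth3.cont (hf : Smooth3 f) : Continuous fun p : ℝ × ℝ × ℝ => f p.1 p.2.1 p.2.2 :=
  hf.continuous

lemma hasDerivAt_pX (hf : Smooth3 f) (x y z : ℝ) :
    HasDerivAt (fun x' => f x' y z)
      (fderiv ℝ (fun p : ℝ × ℝ × ℝ => f p.1 p.2.1 p.2.2) (x, y, z) (1, 0, 0)) x := by
  set F := fun p : ℝ × ℝ × ℝ => f p.1 p.2.1 p.2.2 with hF
  have h1 : HasFDerivAt F (fderiv ℝ F (x, y, z)) (x, y, z) :=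
    (hf.differentiable (by simp) (x, y, z)).hasFDerivAt
  have h2 : HasDerivAt (fun x' : ℝ => ((x', y, z) : ℝ × ℝ × ℝ)) (1, 0, 0) x := by
    have := (hasDerivAt_id x).prodMk (hasDerivAt_const x ((y, z) : ℝ × ℝ))
    exact this
  exact h1.comp_hasDerivAt x h2

lemma pX_eq (hf : Smooth3 f) (x y z : ℝ) :
    pX f x y z = fderiv ℝ (fun p : ℝ × ℝ × ℝ => f p.1 p.2.1 p.2.2) (x, y, z) (1, 0, 0) :=
  (hasDerivAt_pX hf x y z).deriv

lemma hasDerivAt_pX' (hf : Smooth3 f) (x y z : ℝ) :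
    HasDerivAt (fun x' => f x' y z) (pX f x y z) x := by
  rw [pX_eq hf]; exact hasDerivAt_pX hf x y z

lemma hasDerivAt_pY (hf : Smooth3 f) (x y z : ℝ) :
    HasDerivAt (fun y' => f x y' z)
      (fderiv ℝ (fun p : ℝ × ℝ × ℝ => f p.1 p.2.1 p.2.2) (x, y, z) (0, 1, 0)) y := by
  set F := fun p : ℝ × ℝ × ℝ => f p.1 p.2.1 p.2.2 with hF
  have h1 : HasFDerivAt F (fderiv ℝ F (x, y, z)) (x, y, z) :=
    (hf.differentiable (by simp) (x, y, z)).hasFDerivAt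
  have h2 : HasDerivAt (fun y' : ℝ => ((x, y', z) : ℝ × ℝ × ℝ)) (0, 1, 0) y := by
    have := (hasDerivAt_const y x).prodMk ((hasDerivAt_id y).prodMk (hasDerivAt_const y z))
    simpa using this
  exact h1.comp_hasDerivAt y h2

lemma pY_eq (hf : Smooth3 f) (x y z : ℝ) :
    pY f x y z = fderiv ℝ (fun p : ℝ × ℝ × ℝ => f p.1 p.2.1 p.2.2) (x, y, z) (0, 1, 0) :=
  (hasDerivAt_pY hf x y z).deriv

lemma hasDerivAt_pY' (hf : Smooth3 f) (x y z : ℝ) :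
    HasDerivAt (fun y' => f x y' z) (pY f x y z) y := by
  rw [pY_eq hf]; exact hasDerivAt_pY hf x y z

lemma hasDerivAt_pZ (hf : Smooth3 f) (x y z : ℝ) :
    HasDerivAt (fun z' => f x y z')
      (fderiv ℝ (fun p : ℝ × ℝ × ℝ => f p.1 p.2.1 p.2.2) (x, y, z) (0, 0, 1)) z := by
  set F := fun p : ℝ × ℝ × ℝ => f p.1 p.2.1 p.2.2 with hF
  have h1 : HasFDerivAt F (fderiv ℝ F (x, y, z)) (x, y, z) :=
    (hf.differentiable (by simp) (x, y, z)).hasFDerivAt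
  have h2 : HasDerivAt (fun z' : ℝ => ((x, y, z') : ℝ × ℝ × ℝ)) (0, 0, 1) z := by
    have := (hasDerivAt_const z x).prodMk ((hasDerivAt_const z y).prodMk (hasDerivAt_id z))
    simpa using this
  exact h1.comp_hasDerivAt z h2

lemma pZ_eq (hf : Smooth3 f) (x y z : ℝ) :
    pZ f x y z = fderiv ℝ (fun p : ℝ × ℝ × ℝ => f p.1 p.2.1 p.2.2) (x, y, z) (0, 0, 1) :=
  (hasDerivAt_pZ hf x y z).deriv

lemma fderiv_apply_cont (hf : Smooth3 f) (v : ℝ × ℝ × ℝ) :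
    Continuous fun p : ℝ × ℝ × ℝ =>
      fderiv ℝ (fun q : ℝ × ℝ × ℝ => f q.1 q.2.1 q.2.2) p v :=
  (hf.continuous_fderiv (by simp)).clm_apply continuous_const

lemma pX_cont (hf : Smooth3 f) : Continuous fun p : ℝ × ℝ × ℝ => pX f p.1 p.2.1 p.2.2 := by
  have : (fun p : ℝ × ℝ × ℝ => pX f p.1 p.2.1 p.2.2)
      = fun p : ℝ × ℝ × ℝ =>
        fderiv ℝ (fun q : ℝ × ℝ × ℝ => f q.1 q.2.1 q.2.2) p (1, 0, 0) := by
    funext p; exact pX_eq hf p.1 p.2.1 p.2.2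
  rw [this]; exact fderiv_apply_cont hf _

lemma pY_cont (hf : Smooth3 f) : Continuous fun p : ℝ × ℝ × ℝ => pY f p.1 p.2.1 p.2.2 := by
  have : (fun p : ℝ × ℝ × ℝ => pY f p.1 p.2.1 p.2.2)
      = fun p : ℝ × ℝ × ℝ =>
        fderiv ℝ (fun q : ℝ × ℝ × ℝ => f q.1 q.2.1 q.2.2) p (0, 1, 0) := by
    funext p; exact pY_eq hf p.1 p.2.1 p.2.2
  rw [this]; exact fderiv_apply_cont hf _

lemma pZ_cont (hf : Smooth3 f) : Continuous fun p : ℝ × ℝ × ℝ => pZ f p.1 p.2.1 p.2.2 := by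
  have : (fun p : ℝ × ℝ × ℝ => pZ f p.1 p.2.1 p.2.2)
      = fun p : ℝ × ℝ × ℝ =>
        fderiv ℝ (fun q : ℝ × ℝ × ℝ => f q.1 q.2.1 q.2.2) p (0, 0, 1) := by
    funext p; exact pZ_eq hf p.1 p.2.1 p.2.2
  rw [this]; exact fderiv_apply_cont hf _

/-- Monotonicity of the interval integral for continuous functions. -/
lemma imono {f g : ℝ → ℝ} (hf : Continuous f) (hg : Continuous g)
    (h : ∀ t ∈ Icc (0:ℝ) 1, f t ≤ g t) :
    ∫ t in (0:ℝ)..1, f t ≤ ∫ t in (0:ℝ)..1, g t :=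
  intervalIntegral.integral_mono_on zero_le_one (hf.intervalIntegrable 0 1)
    (hg.intervalIntegrable 0 1) h

/-- Continuity of the slice `y ↦ f x y`. -/
lemma cslice {f : ℝ → ℝ → ℝ} (hf : Continuous fun p : ℝ × ℝ => f p.1 p.2) (x : ℝ) :
    Continuous fun y => f x y := hf.comp (continuous_const.prodMk continuous_id)

lemma cslice' {f : ℝ → ℝ → ℝ} (hf : Continuous fun p : ℝ × ℝ => f p.1 p.2) (y : ℝ) :
    Continuous fun x => f x y := hf.comp (continuous_id.prodMk continuous_const)

/-- Iterated Cauchy–Schwarz, 2 variables. -/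
lemma cs2 {f g : ℝ → ℝ → ℝ} (hf : Continuous fun p : ℝ × ℝ => f p.1 p.2)
    (hg : Continuous fun p : ℝ × ℝ => g p.1 p.2) :
    (∫ x in (0:ℝ)..1, ∫ y in (0:ℝ)..1, |f x y| * |g x y|)
      ≤ Real.sqrt (∫ x in (0:ℝ)..1, ∫ y in (0:ℝ)..1, f x y ^ 2)
        * Real.sqrt (∫ x in (0:ℝ)..1, ∫ y in (0:ℝ)..1, g x y ^ 2) := by
  have hF : Continuous fun x => Real.sqrt (∫ y in (0:ℝ)..1, f x y ^ 2) :=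
    Real.continuous_sqrt.comp (cont2 (hf.pow 2))
  have hG : Continuous fun x => Real.sqrt (∫ y in (0:ℝ)..1, g x y ^ 2) :=
    Real.continuous_sqrt.comp (cont2 (hg.pow 2))
  have step1 : ∀ x, (∫ y in (0:ℝ)..1, |f x y| * |g x y|)
      ≤ Real.sqrt (∫ y in (0:ℝ)..1, f x y ^ 2) * Real.sqrt (∫ y in (0:ℝ)..1, g x y ^ 2) :=
    fun x => cs1 (cslice hf x) (cslice hg x)
  calc (∫ x in (0:ℝ)..1, ∫ y in (0:ℝ)..1, |f x y| * |g x y|)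
      ≤ ∫ x in (0:ℝ)..1, Real.sqrt (∫ y in (0:ℝ)..1, f x y ^ 2)
          * Real.sqrt (∫ y in (0:ℝ)..1, g x y ^ 2) :=
        imono (cont2 (hf.abs.mul hg.abs)) (hF.mul hG) (fun x _ => step1 x)
    _ = ∫ x in (0:ℝ)..1, |Real.sqrt (∫ y in (0:ℝ)..1, f x y ^ 2)|
          * |Real.sqrt (∫ y in (0:ℝ)..1, g x y ^ 2)| :=
        intervalIntegral.integral_congr (μ := volume) (fun x _ => by
          rw [abs_of_nonneg (Real.sqrt_nonneg _), abs_of_nonneg (Real.sqrt_nonneg _)])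
    _ ≤ Real.sqrt (∫ x in (0:ℝ)..1, (Real.sqrt (∫ y in (0:ℝ)..1, f x y ^ 2)) ^ 2)
          * Real.sqrt (∫ x in (0:ℝ)..1, (Real.sqrt (∫ y in (0:ℝ)..1, g x y ^ 2)) ^ 2) :=
        cs1 hF hG
    _ = _ := by
        congr 1
        · congr 1
          exact intervalIntegral.integral_congr (μ := volume) (fun x _ =>
            Real.sq_sqrt (intervalIntegral.integral_nonneg zero_le_one fun y _ => sq_nonneg _))
        · congr 1
          exact intervalIntegral.integral_congr (μ := volume) (fun x _ =>
            Real.sq_sqrt (intervalIntegral.integral_nonneg zero_le_one fun y _ => sq_nonneg _))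

/-- slice of a 3-variable continuous function in the first variable. -/
lemma cslice3 {f : ℝ → ℝ → ℝ → ℝ} (hf : Continuous fun p : ℝ × ℝ × ℝ => f p.1 p.2.1 p.2.2)
    (x : ℝ) : Continuous fun p : ℝ × ℝ => f x p.1 p.2 :=
  hf.comp (continuous_const.prodMk (continuous_fst.prodMk continuous_snd))

/-- Iterated Cauchy–Schwarz, 3 variables. -/
lemma cs3 {f g : ℝ → ℝ → ℝ → ℝ} (hf : Continuous fun p : ℝ × ℝ × ℝ => f p.1 p.2.1 p.2.2)
    (hg : Continuous fun p : ℝ × ℝ × ℝ => g p.1 p.2.1 p.2.2) :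
    (∫ x in (0:ℝ)..1, ∫ y in (0:ℝ)..1, ∫ z in (0:ℝ)..1, |f x y z| * |g x y z|)
      ≤ Real.sqrt (∫ x in (0:ℝ)..1, ∫ y in (0:ℝ)..1, ∫ z in (0:ℝ)..1, f x y z ^ 2)
        * Real.sqrt (∫ x in (0:ℝ)..1, ∫ y in (0:ℝ)..1, ∫ z in (0:ℝ)..1, g x y z ^ 2) := by
  have hF : Continuous fun x =>
      Real.sqrt (∫ y in (0:ℝ)..1, ∫ z in (0:ℝ)..1, f x y z ^ 2) :=
    Real.continuous_sqrt.comp (cont2 (cont3 (f := fun x y z => f x y z ^ 2) (hf.pow 2)))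
  have hG : Continuous fun x =>
      Real.sqrt (∫ y in (0:ℝ)..1, ∫ z in (0:ℝ)..1, g x y z ^ 2) :=
    Real.continuous_sqrt.comp (cont2 (cont3 (f := fun x y z => g x y z ^ 2) (hg.pow 2)))
  have step1 : ∀ x, (∫ y in (0:ℝ)..1, ∫ z in (0:ℝ)..1, |f x y z| * |g x y z|)
      ≤ Real.sqrt (∫ y in (0:ℝ)..1, ∫ z in (0:ℝ)..1, f x y z ^ 2)
        * Real.sqrt (∫ y in (0:ℝ)..1, ∫ z in (0:ℝ)..1, g x y z ^ 2) :=
    fun x => cs2 (cslice3 hf x) (cslice3 hg x)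
  calc (∫ x in (0:ℝ)..1, ∫ y in (0:ℝ)..1, ∫ z in (0:ℝ)..1, |f x y z| * |g x y z|)
      ≤ ∫ x in (0:ℝ)..1, Real.sqrt (∫ y in (0:ℝ)..1, ∫ z in (0:ℝ)..1, f x y z ^ 2)
          * Real.sqrt (∫ y in (0:ℝ)..1, ∫ z in (0:ℝ)..1, g x y z ^ 2) :=
        imono (cont2 (cont3 (f := fun x y z => |f x y z| * |g x y z|) (hf.abs.mul hg.abs)))
          (hF.mul hG) (fun x _ => step1 x)
    _ = ∫ x in (0:ℝ)..1, |Real.sqrt (∫ y in (0:ℝ)..1, ∫ z in (0:ℝ)..1, f x y z ^ 2)|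
          * |Real.sqrt (∫ y in (0:ℝ)..1, ∫ z in (0:ℝ)..1, g x y z ^ 2)| :=
        intervalIntegral.integral_congr (μ := volume) (fun x _ => by
          rw [abs_of_nonneg (Real.sqrt_nonneg _), abs_of_nonneg (Real.sqrt_nonneg _)])
    _ ≤ Real.sqrt (∫ x in (0:ℝ)..1,
            (Real.sqrt (∫ y in (0:ℝ)..1, ∫ z in (0:ℝ)..1, f x y z ^ 2)) ^ 2)
          * Real.sqrt (∫ x in (0:ℝ)..1,
            (Real.sqrt (∫ y in (0:ℝ)..1, ∫ z in (0:ℝ)..1, g x y z ^ 2)) ^ 2) :=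
        cs1 hF hG
    _ = _ := by
        have key : ∀ {h : ℝ → ℝ → ℝ → ℝ},
            (Continuous fun p : ℝ × ℝ × ℝ => h p.1 p.2.1 p.2.2) →
            (∫ x in (0:ℝ)..1,
              (Real.sqrt (∫ y in (0:ℝ)..1, ∫ z in (0:ℝ)..1, h x y z ^ 2)) ^ 2)
            = ∫ x in (0:ℝ)..1, ∫ y in (0:ℝ)..1, ∫ z in (0:ℝ)..1, h x y z ^ 2 := by
          intro h hh
          refine intervalIntegral.integral_congr (μ := volume) (fun x _ => ?_)
          refine Real.sq_sqrt (intervalIntegral.integral_nonneg zero_le_one fun y _ =>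
            intervalIntegral.integral_nonneg zero_le_one fun z _ => sq_nonneg _)
        rw [key hf, key hg]

/-- Swap the outer two integrals in a triple iterated integral. -/
lemma swap_xy {f : ℝ → ℝ → ℝ → ℝ}
    (hf : Continuous fun p : ℝ × ℝ × ℝ => f p.1 p.2.1 p.2.2) :
    (∫ y in (0:ℝ)..1, ∫ x in (0:ℝ)..1, ∫ z in (0:ℝ)..1, f x y z)
      = ∫ x in (0:ℝ)..1, ∫ y in (0:ℝ)..1, ∫ z in (0:ℝ)..1, f x y z :=
  (swap2 (f := fun x y => ∫ z in (0:ℝ)..1, f x y z) (cont3 hf)).symm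

/-- Reorder `∫y∫z∫x` into `∫x∫y∫z`. -/
lemma swap_yzx {f : ℝ → ℝ → ℝ → ℝ}
    (hf : Continuous fun p : ℝ × ℝ × ℝ => f p.1 p.2.1 p.2.2) :
    (∫ y in (0:ℝ)..1, ∫ z in (0:ℝ)..1, ∫ x in (0:ℝ)..1, f x y z)
      = ∫ x in (0:ℝ)..1, ∫ y in (0:ℝ)..1, ∫ z in (0:ℝ)..1, f x y z := by
  have inner : ∀ y, (∫ z in (0:ℝ)..1, ∫ x in (0:ℝ)..1, f x y z)
      = ∫ x in (0:ℝ)..1, ∫ z in (0:ℝ)..1, f x y z := by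
    intro y
    exact (swap2 (f := fun x z => f x y z)
      (hf.comp (continuous_fst.prodMk (continuous_const.prodMk continuous_snd)))).symm
  rw [intervalIntegral.integral_congr (μ := volume) (fun y _ => inner y)]
  exact swap_xy hf

/-- Pointwise monotonicity for triple iterated integrals. -/
lemma imono3 {f g : ℝ → ℝ → ℝ → ℝ}
    (hf : Continuous fun p : ℝ × ℝ × ℝ => f p.1 p.2.1 p.2.2)
    (hg : Continuous fun p : ℝ × ℝ × ℝ => g p.1 p.2.1 p.2.2)
    (h : ∀ x y z, f x y z ≤ g x y z) :
    (∫ x in (0:ℝ)..1, ∫ y in (0:ℝ)..1, ∫ z in (0:ℝ)..1, f x y z)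
      ≤ ∫ x in (0:ℝ)..1, ∫ y in (0:ℝ)..1, ∫ z in (0:ℝ)..1, g x y z := by
  refine imono (cont2 (cont3 hf)) (cont2 (cont3 hg)) (fun x _ => ?_)
  refine imono (cslice (f := fun x y => ∫ z in (0:ℝ)..1, f x y z) (cont3 hf) x)
    (cslice (f := fun x y => ∫ z in (0:ℝ)..1, g x y z) (cont3 hg) x) (fun y _ => ?_)
  exact imono (hf.comp (continuous_const.prodMk (continuous_const.prodMk continuous_id)))
    (hg.comp (continuous_const.prodMk (continuous_const.prodMk continuous_id)))
    (fun z _ => h x y z)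

/-- Agmon-type bound: `∫ z, h x z ≤ ∫∫ h + ∫∫ |∂ₛh|` for `x ∈ [0,1]`. -/
lemma agmon {h dh : ℝ → ℝ → ℝ} (hh : Continuous fun p : ℝ × ℝ => h p.1 p.2)
    (hdh : Continuous fun p : ℝ × ℝ => dh p.1 p.2)
    (hd : ∀ s z, HasDerivAt (fun s' => h s' z) (dh s z) s)
    {x : ℝ} (hx : x ∈ Icc (0:ℝ) 1) :
    (∫ z in (0:ℝ)..1, h x z)
      ≤ (∫ s in (0:ℝ)..1, ∫ z in (0:ℝ)..1, h s z)
        + ∫ z in (0:ℝ)..1, ∫ s in (0:ℝ)..1, |dh s z| := by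
  set m : ℝ → ℝ := fun s => ∫ z in (0:ℝ)..1, h s z with hm
  set K : ℝ := ∫ z in (0:ℝ)..1, ∫ s in (0:ℝ)..1, |dh s z| with hK
  have hmc : Continuous m := cont2 hh
  have hKin : Continuous fun z => ∫ s in (0:ℝ)..1, |dh s z| :=
    cont2 (f := fun z s => |dh s z|) (hdh.abs.comp continuous_swap)
  have key : ∀ x₀ ∈ Icc (0:ℝ) 1, m x - m x₀ ≤ K := by
    intro x₀ hx₀
    have e1 : ∀ z : ℝ, h x z - h x₀ z = ∫ s in x₀..x, dh s z := by
      intro z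
      exact (intervalIntegral.integral_eq_sub_of_hasDerivAt (fun s _ => hd s z)
        ((cslice' hdh z).intervalIntegrable x₀ x)).symm
    have e2 : m x - m x₀ = ∫ z in (0:ℝ)..1, (h x z - h x₀ z) :=
      (intervalIntegral.integral_sub ((cslice hh x).intervalIntegrable 0 1)
        ((cslice hh x₀).intervalIntegrable 0 1)).symm
    rw [e2]
    refine imono (((cslice hh x).sub (cslice hh x₀))) hKin (fun z _ => ?_)
    rw [e1 z]
    exact le_trans (le_abs_self _) (abs_integral_between (cslice' hdh z) hx₀ hx)
  have e3 : m x - (∫ s in (0:ℝ)..1, m s) = ∫ s in (0:ℝ)..1, (m x - m s) := by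
    rw [intervalIntegral.integral_sub ((continuous_const (y := m x)).intervalIntegrable 0 1)
      (hmc.intervalIntegrable 0 1)]
    simp
  have e4 : (∫ s in (0:ℝ)..1, (m x - m s)) ≤ ∫ s in (0:ℝ)..1, K :=
    imono (continuous_const.sub hmc) continuous_const (fun s hs => key s hs)
  have e5 : (∫ s in (0:ℝ)..1, K) = K := by simp
  have := e3 ▸ (e4.trans_eq e5)
  linarith

/-! ### Part 4 -/

lemma inn2 {f : ℝ → ℝ → ℝ} (h : ∀ x y, 0 ≤ f x y) :
    0 ≤ ∫ x in (0:ℝ)..1, ∫ y in (0:ℝ)..1, f x y :=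
  intervalIntegral.integral_nonneg zero_le_one fun x _ =>
    intervalIntegral.integral_nonneg zero_le_one fun y _ => h x y

lemma inn3 {f : ℝ → ℝ → ℝ → ℝ} (h : ∀ x y z, 0 ≤ f x y z) :
    0 ≤ ∫ x in (0:ℝ)..1, ∫ y in (0:ℝ)..1, ∫ z in (0:ℝ)..1, f x y z :=
  intervalIntegral.integral_nonneg zero_le_one fun x _ => inn2 (h x)

lemma pull3 {f : ℝ → ℝ → ℝ → ℝ} (c : ℝ) :
    (∫ x in (0:ℝ)..1, ∫ y in (0:ℝ)..1, ∫ z in (0:ℝ)..1, c * f x y z)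
      = c * ∫ x in (0:ℝ)..1, ∫ y in (0:ℝ)..1, ∫ z in (0:ℝ)..1, f x y z := by
  have h1 : ∀ x y, (∫ z in (0:ℝ)..1, c * f x y z) = c * ∫ z in (0:ℝ)..1, f x y z :=
    fun x y => intervalIntegral.integral_const_mul c _
  have h2 : ∀ x, (∫ y in (0:ℝ)..1, ∫ z in (0:ℝ)..1, c * f x y z)
      = c * ∫ y in (0:ℝ)..1, ∫ z in (0:ℝ)..1, f x y z := by
    intro x
    rw [intervalIntegral.integral_congr (μ := volume) (fun y _ => h1 x y)]
    exact intervalIntegral.integral_const_mul c _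
  rw [intervalIntegral.integral_congr (μ := volume) (fun x _ => h2 x)]
  exact intervalIntegral.integral_const_mul c _

/-- Reorder `∫x∫z∫t f x t z` into `∫x∫t∫z f x t z`. -/
lemma swap_xzy {f : ℝ → ℝ → ℝ → ℝ}
    (hf : Continuous fun p : ℝ × ℝ × ℝ => f p.1 p.2.1 p.2.2) :
    (∫ x in (0:ℝ)..1, ∫ z in (0:ℝ)..1, ∫ t in (0:ℝ)..1, f x t z)
      = ∫ x in (0:ℝ)..1, ∫ t in (0:ℝ)..1, ∫ z in (0:ℝ)..1, f x t z := by
  refine intervalIntegral.integral_congr (μ := volume) (fun x _ => ?_)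
  exact (swap2 (f := fun t z => f x t z)
    (hf.comp (continuous_const.prodMk (continuous_fst.prodMk continuous_snd)))).symm

lemma L2_nonneg (f : ℝ → ℝ → ℝ → ℝ) : 0 ≤ L2 f := Real.sqrt_nonneg _
lemma gradL2_nonneg (f : ℝ → ℝ → ℝ → ℝ) : 0 ≤ gradL2 f := Real.sqrt_nonneg _

lemma L2_sq {f : ℝ → ℝ → ℝ → ℝ} :
    L2 f ^ 2 = ∫ x in (0:ℝ)..1, ∫ y in (0:ℝ)..1, ∫ z in (0:ℝ)..1, f x y z ^ 2 := by
  rw [L2, I3]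
  exact Real.sq_sqrt (inn3 fun x y z => sq_nonneg _)

lemma gradL2_sq {f : ℝ → ℝ → ℝ → ℝ} :
    gradL2 f ^ 2 = ∫ x in (0:ℝ)..1, ∫ y in (0:ℝ)..1, ∫ z in (0:ℝ)..1,
      (pX f x y z ^ 2 + pY f x y z ^ 2 + pZ f x y z ^ 2) := by
  rw [gradL2, I3]
  exact Real.sq_sqrt (inn3 fun x y z => by positivity)

/-- The Ladyzhenskaya-type bound on `m(x,y) = ∫ z, μ²`. -/
lemma mnorm_bound {μ : ℝ → ℝ → ℝ → ℝ} (hμ : Smooth3 μ) :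
    Real.sqrt (∫ x in (0:ℝ)..1, ∫ y in (0:ℝ)..1, (∫ z in (0:ℝ)..1, μ x y z ^ 2) ^ 2)
      ≤ L2 μ * (L2 μ + 2 * gradL2 μ) := by
  have hμc : Continuous fun p : ℝ × ℝ × ℝ => μ p.1 p.2.1 p.2.2 := hμ.continuous
  have hpX := pX_cont hμ
  have hpY := pY_cont hμ
  set a := L2 μ with ha_def
  set b := gradL2 μ with hb_def
  have ha : 0 ≤ a := L2_nonneg μ
  have hb : 0 ≤ b := gradL2_nonneg μ
  set Q := a * (a + 2 * b) with hQ_def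
  have hQ : 0 ≤ Q := by positivity
  -- the function m
  set m : ℝ → ℝ → ℝ := fun x y => ∫ z in (0:ℝ)..1, μ x y z ^ 2 with hm_def
  have hm0 : ∀ x y, 0 ≤ m x y :=
    fun x y => intervalIntegral.integral_nonneg zero_le_one fun z _ => sq_nonneg _
  have hmc : Continuous fun p : ℝ × ℝ => m p.1 p.2 :=
    cont3 (f := fun x y z => μ x y z ^ 2) (hμc.pow 2)
  -- F and G
  set F : ℝ → ℝ := fun y => (∫ s in (0:ℝ)..1, ∫ z in (0:ℝ)..1, μ s y z ^ 2)
      + ∫ z in (0:ℝ)..1, ∫ s in (0:ℝ)..1, |2 * μ s y z * pX μ s y z| with hF_def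
  set G : ℝ → ℝ := fun x => (∫ t in (0:ℝ)..1, ∫ z in (0:ℝ)..1, μ x t z ^ 2)
      + ∫ z in (0:ℝ)..1, ∫ t in (0:ℝ)..1, |2 * μ x t z * pY μ x t z| with hG_def
  -- continuity of F and G
  have hFc : Continuous F := by
    refine Continuous.add ?_ ?_
    · exact cont2 (f := fun y s => ∫ z in (0:ℝ)..1, μ s y z ^ 2)
        (cont3 (f := fun y s z => μ s y z ^ 2)
          ((hμc.comp ((continuous_snd.fst).prodMk
            (continuous_fst.prodMk continuous_snd.snd))).pow 2))
    · exact cont2 (f := fun y z => ∫ s in (0:ℝ)..1, |2 * μ s y z * pX μ s y z|)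
        (cont3 (f := fun y z s => |2 * μ s y z * pX μ s y z|)
          (((continuous_const.mul (hμc.comp ((continuous_snd.snd).prodMk
              (continuous_fst.prodMk continuous_snd.fst)))).mul
            (hpX.comp ((continuous_snd.snd).prodMk
              (continuous_fst.prodMk continuous_snd.fst)))).abs))
  have hGc : Continuous G := by
    refine Continuous.add ?_ ?_
    · exact cont2 (f := fun x t => ∫ z in (0:ℝ)..1, μ x t z ^ 2)
        (cont3 (f := fun x t z => μ x t z ^ 2) (hμc.pow 2))
    · exact cont2 (f := fun x z => ∫ t in (0:ℝ)..1, |2 * μ x t z * pY μ x t z|)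
        (cont3 (f := fun x z t => |2 * μ x t z * pY μ x t z|)
          (((continuous_const.mul (hμc.comp ((continuous_fst).prodMk
              ((continuous_snd.snd).prodMk continuous_snd.fst)))).mul
            (hpY.comp ((continuous_fst).prodMk
              ((continuous_snd.snd).prodMk continuous_snd.fst)))).abs))
  -- Agmon bounds
  have hmF : ∀ y : ℝ, ∀ x ∈ Icc (0:ℝ) 1, m x y ≤ F y := by
    intro y x hx
    have perm : Continuous fun p : ℝ × ℝ => ((p.1, y, p.2) : ℝ × ℝ × ℝ) :=
      continuous_fst.prodMk (continuous_const.prodMk continuous_snd)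
    refine agmon (h := fun s z => μ s y z ^ 2)
      (dh := fun s z => 2 * μ s y z * pX μ s y z)
      ((hμc.comp perm).pow 2)
      ((continuous_const.mul (hμc.comp perm)).mul (hpX.comp perm))
      (fun s z => ?_) hx
    exact ((hasDerivAt_pX' hμ s y z).pow 2).congr_deriv (by simp)
  have hmG : ∀ x : ℝ, ∀ y ∈ Icc (0:ℝ) 1, m x y ≤ G x := by
    intro x y hy
    have perm : Continuous fun p : ℝ × ℝ => ((x, p.1, p.2) : ℝ × ℝ × ℝ) :=
      continuous_const.prodMk (continuous_fst.prodMk continuous_snd)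
    refine agmon (h := fun t z => μ x t z ^ 2)
      (dh := fun t z => 2 * μ x t z * pY μ x t z)
      ((hμc.comp perm).pow 2)
      ((continuous_const.mul (hμc.comp perm)).mul (hpY.comp perm))
      (fun t z => ?_) hy
    exact ((hasDerivAt_pY' hμ x t z).pow 2).congr_deriv (by simp)
  have hF0 : ∀ y, 0 ≤ F y := fun y =>
    le_trans (hm0 0 y) (hmF y 0 ⟨le_refl _, zero_le_one⟩)
  have hG0 : ∀ x, 0 ≤ G x := fun x =>
    le_trans (hm0 x 0) (hmG x 0 ⟨le_refl _, zero_le_one⟩)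
  -- Step A: ∫∫ m² ≤ (∫F)(∫G)
  have stepA : (∫ x in (0:ℝ)..1, ∫ y in (0:ℝ)..1, m x y ^ 2)
      ≤ (∫ y in (0:ℝ)..1, F y) * (∫ x in (0:ℝ)..1, G x) := by
    have s1 : (∫ x in (0:ℝ)..1, ∫ y in (0:ℝ)..1, m x y ^ 2)
        ≤ ∫ x in (0:ℝ)..1, ∫ y in (0:ℝ)..1, F y * G x := by
      refine imono (cont2 ((hmc.pow 2))) (cont2 ((hFc.comp continuous_snd).mul
        (hGc.comp continuous_fst))) (fun x hx => ?_)
      refine imono (cslice (f := fun x y => m x y ^ 2) (hmc.pow 2) x)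
        (hFc.mul continuous_const) (fun y hy => ?_)
      rw [sq]
      exact mul_le_mul (hmF y x hx) (hmG x y hy) (hm0 x y) (hF0 y)
    have s2 : (∫ x in (0:ℝ)..1, ∫ y in (0:ℝ)..1, F y * G x)
        = (∫ y in (0:ℝ)..1, F y) * (∫ x in (0:ℝ)..1, G x) := by
      have h1 : ∀ x, (∫ y in (0:ℝ)..1, F y * G x)
          = (∫ y in (0:ℝ)..1, F y) * G x := fun x =>
        intervalIntegral.integral_mul_const _ _
      rw [intervalIntegral.integral_congr (μ := volume) (fun x _ => h1 x)]
      exact intervalIntegral.integral_const_mul _ _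
    exact s1.trans_eq s2
  -- bound on the cross term, generic shape
  -- Step B : ∫ F ≤ Q
  have stepB : (∫ y in (0:ℝ)..1, F y) ≤ Q := by
    have hsplit : (∫ y in (0:ℝ)..1, F y)
        = (∫ y in (0:ℝ)..1, ∫ s in (0:ℝ)..1, ∫ z in (0:ℝ)..1, μ s y z ^ 2)
          + ∫ y in (0:ℝ)..1, ∫ z in (0:ℝ)..1, ∫ s in (0:ℝ)..1,
              |2 * μ s y z * pX μ s y z| := by
      rw [hF_def]
      exact intervalIntegral.integral_add
        ((cont2 (f := fun y s => ∫ z in (0:ℝ)..1, μ s y z ^ 2)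
          (cont3 (f := fun y s z => μ s y z ^ 2)
            ((hμc.comp ((continuous_snd.fst).prodMk
              (continuous_fst.prodMk continuous_snd.snd))).pow 2))).intervalIntegrable 0 1)
        ((cont2 (f := fun y z => ∫ s in (0:ℝ)..1, |2 * μ s y z * pX μ s y z|)
          (cont3 (f := fun y z s => |2 * μ s y z * pX μ s y z|)
            (((continuous_const.mul (hμc.comp ((continuous_snd.snd).prodMk
                (continuous_fst.prodMk continuous_snd.fst)))).mul
              (hpX.comp ((continuous_snd.snd).prodMk
                (continuous_fst.prodMk continuous_snd.fst)))).abs))).intervalIntegrable 0 1)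
    have hT1 : (∫ y in (0:ℝ)..1, ∫ s in (0:ℝ)..1, ∫ z in (0:ℝ)..1, μ s y z ^ 2) = a ^ 2 := by
      rw [swap_xy (f := fun s y z => μ s y z ^ 2) (hμc.pow 2), ha_def, L2_sq]
    have hT2 : (∫ y in (0:ℝ)..1, ∫ z in (0:ℝ)..1, ∫ s in (0:ℝ)..1,
        |2 * μ s y z * pX μ s y z|) ≤ a * (2 * b) := by
      have habs : ∀ s y z : ℝ, |2 * μ s y z * pX μ s y z|
          = |μ s y z| * |2 * pX μ s y z| := by
        intro s y z
        rw [abs_mul, abs_mul, abs_mul]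
        ring
      have hcongr : (∫ y in (0:ℝ)..1, ∫ z in (0:ℝ)..1, ∫ s in (0:ℝ)..1,
            |2 * μ s y z * pX μ s y z|)
          = ∫ y in (0:ℝ)..1, ∫ z in (0:ℝ)..1, ∫ s in (0:ℝ)..1,
            |μ s y z| * |2 * pX μ s y z| := by
        refine intervalIntegral.integral_congr (μ := volume) (fun y _ => ?_)
        refine intervalIntegral.integral_congr (μ := volume) (fun z _ => ?_)
        exact intervalIntegral.integral_congr (μ := volume) (fun s _ => habs s y z)
      rw [hcongr]
      have hcs := cs3 (f := fun y z s => μ s y z) (g := fun y z s => 2 * pX μ s y z)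
        (hμc.comp ((continuous_snd.snd).prodMk (continuous_fst.prodMk continuous_snd.fst)))
        (continuous_const.mul (hpX.comp ((continuous_snd.snd).prodMk
          (continuous_fst.prodMk continuous_snd.fst))))
      refine hcs.trans ?_
      have e1 : (∫ y in (0:ℝ)..1, ∫ z in (0:ℝ)..1, ∫ s in (0:ℝ)..1, μ s y z ^ 2) = a ^ 2 := by
        rw [swap_yzx (f := fun s y z => μ s y z ^ 2) (hμc.pow 2), ha_def, L2_sq]
      have e2 : (∫ y in (0:ℝ)..1, ∫ z in (0:ℝ)..1, ∫ s in (0:ℝ)..1,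
          (2 * pX μ s y z) ^ 2) ≤ (2 * b) ^ 2 := by
        rw [swap_yzx (f := fun s y z => (2 * pX μ s y z) ^ 2)
          ((continuous_const.mul hpX).pow 2)]
        have mono := imono3 (f := fun s y z => (2 * pX μ s y z) ^ 2)
          (g := fun s y z => 4 * (pX μ s y z ^ 2 + pY μ s y z ^ 2 + pZ μ s y z ^ 2))
          ((continuous_const.mul hpX).pow 2)
          (continuous_const.mul (((hpX.pow 2).add ((pY_cont hμ).pow 2)).add
            ((pZ_cont hμ).pow 2)))
          (fun s y z => by
            show (2 * pX μ s y z) ^ 2 ≤ 4 * (pX μ s y z ^ 2 + pY μ s y z ^ 2 + pZ μ s y z ^ 2)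
            nlinarith [sq_nonneg (pY μ s y z), sq_nonneg (pZ μ s y z)])
        refine mono.trans ?_
        rw [pull3]
        rw [hb_def] at *
        have := gradL2_sq (f := μ)
        nlinarith [this]
      calc Real.sqrt (∫ y in (0:ℝ)..1, ∫ z in (0:ℝ)..1, ∫ s in (0:ℝ)..1, μ s y z ^ 2)
            * Real.sqrt (∫ y in (0:ℝ)..1, ∫ z in (0:ℝ)..1, ∫ s in (0:ℝ)..1,
              (2 * pX μ s y z) ^ 2)
          ≤ Real.sqrt (a ^ 2) * Real.sqrt ((2 * b) ^ 2) := by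
            refine mul_le_mul ?_ ?_ (Real.sqrt_nonneg _) (Real.sqrt_nonneg _)
            · exact le_of_eq (by rw [e1])
            · exact Real.sqrt_le_sqrt e2
        _ = a * (2 * b) := by
            rw [Real.sqrt_sq ha, Real.sqrt_sq (by positivity)]
    rw [hsplit, hQ_def]
    calc (∫ y in (0:ℝ)..1, ∫ s in (0:ℝ)..1, ∫ z in (0:ℝ)..1, μ s y z ^ 2)
          + (∫ y in (0:ℝ)..1, ∫ z in (0:ℝ)..1, ∫ s in (0:ℝ)..1, |2 * μ s y z * pX μ s y z|)
        ≤ a ^ 2 + a * (2 * b) := by rw [hT1]; exact add_le_add le_rfl hT2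
      _ = a * (a + 2 * b) := by ring
  -- Step C : ∫ G ≤ Q
  have stepC : (∫ x in (0:ℝ)..1, G x) ≤ Q := by
    have hsplit : (∫ x in (0:ℝ)..1, G x)
        = (∫ x in (0:ℝ)..1, ∫ t in (0:ℝ)..1, ∫ z in (0:ℝ)..1, μ x t z ^ 2)
          + ∫ x in (0:ℝ)..1, ∫ z in (0:ℝ)..1, ∫ t in (0:ℝ)..1,
              |2 * μ x t z * pY μ x t z| := by
      rw [hG_def]
      exact intervalIntegral.integral_add
        ((cont2 (f := fun x t => ∫ z in (0:ℝ)..1, μ x t z ^ 2)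
          (cont3 (f := fun x t z => μ x t z ^ 2) (hμc.pow 2))).intervalIntegrable 0 1)
        ((cont2 (f := fun x z => ∫ t in (0:ℝ)..1, |2 * μ x t z * pY μ x t z|)
          (cont3 (f := fun x z t => |2 * μ x t z * pY μ x t z|)
            (((continuous_const.mul (hμc.comp ((continuous_fst).prodMk
                ((continuous_snd.snd).prodMk continuous_snd.fst)))).mul
              (hpY.comp ((continuous_fst).prodMk
                ((continuous_snd.snd).prodMk continuous_snd.fst)))).abs))).intervalIntegrable 0 1)
    have hT1 : (∫ x in (0:ℝ)..1, ∫ t in (0:ℝ)..1, ∫ z in (0:ℝ)..1, μ x t z ^ 2) = a ^ 2 := by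
      rw [ha_def, L2_sq]
    have hT2 : (∫ x in (0:ℝ)..1, ∫ z in (0:ℝ)..1, ∫ t in (0:ℝ)..1,
        |2 * μ x t z * pY μ x t z|) ≤ a * (2 * b) := by
      have habs : ∀ x t z : ℝ, |2 * μ x t z * pY μ x t z|
          = |μ x t z| * |2 * pY μ x t z| := by
        intro x t z
        rw [abs_mul, abs_mul, abs_mul]
        ring
      have hcongr : (∫ x in (0:ℝ)..1, ∫ z in (0:ℝ)..1, ∫ t in (0:ℝ)..1,
            |2 * μ x t z * pY μ x t z|)
          = ∫ x in (0:ℝ)..1, ∫ z in (0:ℝ)..1, ∫ t in (0:ℝ)..1,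
            |μ x t z| * |2 * pY μ x t z| := by
        refine intervalIntegral.integral_congr (μ := volume) (fun x _ => ?_)
        refine intervalIntegral.integral_congr (μ := volume) (fun z _ => ?_)
        exact intervalIntegral.integral_congr (μ := volume) (fun t _ => habs x t z)
      rw [hcongr]
      have hcs := cs3 (f := fun x z t => μ x t z) (g := fun x z t => 2 * pY μ x t z)
        (hμc.comp ((continuous_fst).prodMk ((continuous_snd.snd).prodMk continuous_snd.fst)))
        (continuous_const.mul (hpY.comp ((continuous_fst).prodMk
          ((continuous_snd.snd).prodMk continuous_snd.fst))))
      refine hcs.trans ?_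
      have e1 : (∫ x in (0:ℝ)..1, ∫ z in (0:ℝ)..1, ∫ t in (0:ℝ)..1, μ x t z ^ 2) = a ^ 2 := by
        rw [swap_xzy (f := fun x t z => μ x t z ^ 2) (hμc.pow 2), ha_def, L2_sq]
      have e2 : (∫ x in (0:ℝ)..1, ∫ z in (0:ℝ)..1, ∫ t in (0:ℝ)..1,
          (2 * pY μ x t z) ^ 2) ≤ (2 * b) ^ 2 := by
        rw [swap_xzy (f := fun x t z => (2 * pY μ x t z) ^ 2)
          ((continuous_const.mul hpY).pow 2)]
        have mono := imono3 (f := fun x t z => (2 * pY μ x t z) ^ 2)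
          (g := fun x t z => 4 * (pX μ x t z ^ 2 + pY μ x t z ^ 2 + pZ μ x t z ^ 2))
          ((continuous_const.mul hpY).pow 2)
          (continuous_const.mul (((hpX.pow 2).add ((pY_cont hμ).pow 2)).add
            ((pZ_cont hμ).pow 2)))
          (fun x t z => by
            show (2 * pY μ x t z) ^ 2 ≤ 4 * (pX μ x t z ^ 2 + pY μ x t z ^ 2 + pZ μ x t z ^ 2)
            nlinarith [sq_nonneg (pX μ x t z), sq_nonneg (pZ μ x t z)])
        refine mono.trans ?_
        rw [pull3]
        rw [hb_def] at *
        have := gradL2_sq (f := μ)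
        nlinarith [this]
      calc Real.sqrt (∫ x in (0:ℝ)..1, ∫ z in (0:ℝ)..1, ∫ t in (0:ℝ)..1, μ x t z ^ 2)
            * Real.sqrt (∫ x in (0:ℝ)..1, ∫ z in (0:ℝ)..1, ∫ t in (0:ℝ)..1,
              (2 * pY μ x t z) ^ 2)
          ≤ Real.sqrt (a ^ 2) * Real.sqrt ((2 * b) ^ 2) := by
            refine mul_le_mul ?_ ?_ (Real.sqrt_nonneg _) (Real.sqrt_nonneg _)
            · exact le_of_eq (by rw [e1])
            · exact Real.sqrt_le_sqrt e2
        _ = a * (2 * b) := by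
            rw [Real.sqrt_sq ha, Real.sqrt_sq (by positivity)]
    rw [hsplit, hQ_def]
    calc (∫ x in (0:ℝ)..1, ∫ t in (0:ℝ)..1, ∫ z in (0:ℝ)..1, μ x t z ^ 2)
          + (∫ x in (0:ℝ)..1, ∫ z in (0:ℝ)..1, ∫ t in (0:ℝ)..1, |2 * μ x t z * pY μ x t z|)
        ≤ a ^ 2 + a * (2 * b) := by rw [hT1]; exact add_le_add le_rfl hT2
      _ = a * (a + 2 * b) := by ring
  -- conclude
  have hFint0 : 0 ≤ ∫ y in (0:ℝ)..1, F y :=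
    intervalIntegral.integral_nonneg zero_le_one fun y _ => hF0 y
  have final : (∫ x in (0:ℝ)..1, ∫ y in (0:ℝ)..1, m x y ^ 2) ≤ Q ^ 2 := by
    calc (∫ x in (0:ℝ)..1, ∫ y in (0:ℝ)..1, m x y ^ 2)
        ≤ (∫ y in (0:ℝ)..1, F y) * (∫ x in (0:ℝ)..1, G x) := stepA
      _ ≤ Q * Q := by
          refine mul_le_mul stepB stepC ?_ hQ
          exact intervalIntegral.integral_nonneg zero_le_one fun x _ => hG0 x
      _ = Q ^ 2 := (sq Q).symm
  calc Real.sqrt (∫ x in (0:ℝ)..1, ∫ y in (0:ℝ)..1, (∫ z in (0:ℝ)..1, μ x y z ^ 2) ^ 2)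
      ≤ Real.sqrt (Q ^ 2) := Real.sqrt_le_sqrt final
    _ = Q := Real.sqrt_sq hQ


lemma l2bound1 {h : ℝ → ℝ} (hh : Continuous h) :
    (∫ t in (0:ℝ)..1, |h t|) ≤ Real.sqrt (∫ t in (0:ℝ)..1, h t ^ 2) := by
  have := cs1 hh (g := fun _ => (1:ℝ)) continuous_const
  simpa using this

lemma sqrtQQ {a b a' b' : ℝ} (ha : 0 ≤ a) (hb : 0 ≤ b) (ha' : 0 ≤ a') (hb' : 0 ≤ b') :
    Real.sqrt ((a * (a + 2 * b)) * (a' * (a' + 2 * b')))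
      ≤ 2 * Real.sqrt a * (Real.sqrt a + Real.sqrt b) * Real.sqrt a'
        * (Real.sqrt a' + Real.sqrt b') := by
  have ea : Real.sqrt a ^ 2 = a := Real.sq_sqrt ha
  have eb : Real.sqrt b ^ 2 = b := Real.sq_sqrt hb
  have ea' : Real.sqrt a' ^ 2 = a' := Real.sq_sqrt ha'
  have eb' : Real.sqrt b' ^ 2 = b' := Real.sq_sqrt hb'
  have na := Real.sqrt_nonneg a
  have nb := Real.sqrt_nonneg b
  have na' := Real.sqrt_nonneg a'
  have nb' := Real.sqrt_nonneg b'
  have k1 : a * (a + 2 * b) ≤ 2 * (Real.sqrt a * (Real.sqrt a + Real.sqrt b)) ^ 2 := by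
    nlinarith [mul_nonneg (mul_nonneg (mul_nonneg na na) na) nb]
  have k1' : a' * (a' + 2 * b') ≤ 2 * (Real.sqrt a' * (Real.sqrt a' + Real.sqrt b')) ^ 2 := by
    nlinarith [mul_nonneg (mul_nonneg (mul_nonneg na' na') na') nb']
  have hprod : (a * (a + 2 * b)) * (a' * (a' + 2 * b'))
      ≤ (2 * Real.sqrt a * (Real.sqrt a + Real.sqrt b) * Real.sqrt a'
        * (Real.sqrt a' + Real.sqrt b')) ^ 2 := by
    have hL' : 0 ≤ a' * (a' + 2 * b') := by positivity
    have hR : 0 ≤ 2 * (Real.sqrt a * (Real.sqrt a + Real.sqrt b)) ^ 2 := by positivity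
    calc (a * (a + 2 * b)) * (a' * (a' + 2 * b'))
        ≤ (2 * (Real.sqrt a * (Real.sqrt a + Real.sqrt b)) ^ 2)
          * (2 * (Real.sqrt a' * (Real.sqrt a' + Real.sqrt b')) ^ 2) :=
          mul_le_mul k1 k1' hL' hR
      _ = _ := by ring
  calc Real.sqrt ((a * (a + 2 * b)) * (a' * (a' + 2 * b')))
      ≤ Real.sqrt ((2 * Real.sqrt a * (Real.sqrt a + Real.sqrt b) * Real.sqrt a'
        * (Real.sqrt a' + Real.sqrt b')) ^ 2) := Real.sqrt_le_sqrt hprod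
    _ = _ := Real.sqrt_sq (by positivity)


end Aniso

open Aniso

/-- **Anisotropic trilinear estimate (Lemma 2.5 model form).**
`|∫_Ω (∫_ξ¹ div v dξ') μ ν| ≤ c |div v|₂ |μ|₂^{1/2}(|μ|₂^{1/2}+|∇μ|₂^{1/2})
|ν|₂^{1/2}(|ν|₂^{1/2}+|∇ν|₂^{1/2})`. -/
theorem anisotropic_trilinear_estimate_H1 :
    ∃ c : ℝ, 0 < c ∧ ∀ v₁ v₂ μ ν : ℝ → ℝ → ℝ → ℝ,
      Smooth3 v₁ → Per v₁ → Smooth3 v₂ → Per v₂ →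
      Smooth3 μ → Per μ → Smooth3 ν → Per ν →
      |I3 (fun x y z =>
          (∫ ξ' in z..1, (pX v₁ x y ξ' + pY v₂ x y ξ')) * μ x y z * ν x y z)|
        ≤ c * L2 (fun x y z => pX v₁ x y z + pY v₂ x y z)
            * Real.sqrt (L2 μ) * (Real.sqrt (L2 μ) + Real.sqrt (gradL2 μ))
            * Real.sqrt (L2 ν) * (Real.sqrt (L2 ν) + Real.sqrt (gradL2 ν)) := by
  refine ⟨2, two_pos, ?_⟩
  intro v₁ v₂ μ ν hv₁ _ hv₂ _ hμ _ hν _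
  set g : ℝ → ℝ → ℝ → ℝ := fun x y t => pX v₁ x y t + pY v₂ x y t with hg_def
  have hgc : Continuous fun p : ℝ × ℝ × ℝ => g p.1 p.2.1 p.2.2 :=
    (pX_cont hv₁).add (pY_cont hv₂)
  have hμc : Continuous fun p : ℝ × ℝ × ℝ => μ p.1 p.2.1 p.2.2 := hμ.continuous
  have hνc : Continuous fun p : ℝ × ℝ × ℝ => ν p.1 p.2.1 p.2.2 := hν.continuous
  set A : ℝ → ℝ → ℝ → ℝ := fun x y z => ∫ t in z..1, g x y t with hA_def
  have hAc : Continuous fun p : ℝ × ℝ × ℝ => A p.1 p.2.1 p.2.2 := by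
    have e : (fun p : ℝ × ℝ × ℝ => A p.1 p.2.1 p.2.2)
        = fun p : ℝ × ℝ × ℝ => -(∫ t in (1:ℝ)..(p.2.2), g p.1 p.2.1 t) := by
      funext p
      rw [hA_def]
      exact intervalIntegral.integral_symm 1 p.2.2
    rw [e]
    refine Continuous.neg ?_
    exact intervalIntegral.continuous_parametric_intervalIntegral_of_continuous (μ := volume)
      (f := fun (p : ℝ × ℝ × ℝ) t => g p.1 p.2.1 t) (a₀ := 1)
      (hgc.comp ((continuous_fst.fst).prodMk
        ((continuous_fst.snd.fst).prodMk continuous_snd)))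
      (s := fun p => p.2.2) continuous_snd.snd
  -- slice continuity helpers
  have hgsl : ∀ x y : ℝ, Continuous fun t => g x y t := fun x y =>
    hgc.comp (continuous_const.prodMk (continuous_const.prodMk continuous_id))
  have hμsl : ∀ x y : ℝ, Continuous fun z => μ x y z := fun x y =>
    hμc.comp (continuous_const.prodMk (continuous_const.prodMk continuous_id))
  have hνsl : ∀ x y : ℝ, Continuous fun z => ν x y z := fun x y =>
    hνc.comp (continuous_const.prodMk (continuous_const.prodMk continuous_id))
  -- m functions and B
  set mμ : ℝ → ℝ → ℝ := fun x y => ∫ z in (0:ℝ)..1, μ x y z ^ 2 with hmμ_def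
  set mν : ℝ → ℝ → ℝ := fun x y => ∫ z in (0:ℝ)..1, ν x y z ^ 2 with hmν_def
  set B : ℝ → ℝ → ℝ := fun x y => Real.sqrt (∫ z in (0:ℝ)..1, g x y z ^ 2) with hB_def
  have hmμ0 : ∀ x y, 0 ≤ mμ x y := fun x y =>
    intervalIntegral.integral_nonneg zero_le_one fun z _ => sq_nonneg _
  have hmν0 : ∀ x y, 0 ≤ mν x y := fun x y =>
    intervalIntegral.integral_nonneg zero_le_one fun z _ => sq_nonneg _
  have hB0 : ∀ x y, 0 ≤ B x y := fun x y => Real.sqrt_nonneg _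
  have hmμc : Continuous fun p : ℝ × ℝ => mμ p.1 p.2 :=
    cont3 (f := fun x y z => μ x y z ^ 2) (hμc.pow 2)
  have hmνc : Continuous fun p : ℝ × ℝ => mν p.1 p.2 :=
    cont3 (f := fun x y z => ν x y z ^ 2) (hνc.pow 2)
  have hBc : Continuous fun p : ℝ × ℝ => B p.1 p.2 :=
    Real.continuous_sqrt.comp (cont3 (f := fun x y z => g x y z ^ 2) (hgc.pow 2))
  -- the integrand Φ
  set Φ : ℝ → ℝ → ℝ → ℝ := fun x y z => A x y z * μ x y z * ν x y z with hΦ_def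
  have hΦc : Continuous fun p : ℝ × ℝ × ℝ => Φ p.1 p.2.1 p.2.2 := (hAc.mul hμc).mul hνc
  -- Ψ
  set Ψ : ℝ → ℝ → ℝ := fun x y =>
    B x y * (Real.sqrt (mμ x y) * Real.sqrt (mν x y)) with hΨ_def
  have hΨc : Continuous fun p : ℝ × ℝ => Ψ p.1 p.2 :=
    hBc.mul ((Real.continuous_sqrt.comp hmμc).mul (Real.continuous_sqrt.comp hmνc))
  -- step 0 : |A| ≤ B on the slab
  have hAB : ∀ x y : ℝ, ∀ z ∈ Icc (0:ℝ) 1, |A x y z| ≤ B x y := by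
    intro x y z hz
    calc |A x y z| ≤ ∫ t in (0:ℝ)..1, |g x y t| :=
        abs_integral_between (hgsl x y) hz ⟨zero_le_one, le_refl 1⟩
      _ ≤ B x y := l2bound1 (hgsl x y)
  -- step 1 : pointwise in (x,y)
  have step1 : ∀ x y : ℝ, |∫ z in (0:ℝ)..1, Φ x y z| ≤ Ψ x y := by
    intro x y
    have h1 : |∫ z in (0:ℝ)..1, Φ x y z| ≤ ∫ z in (0:ℝ)..1, |Φ x y z| :=
      intervalIntegral.abs_integral_le_integral_abs zero_le_one
    have h2 : (∫ z in (0:ℝ)..1, |Φ x y z|)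
        ≤ ∫ z in (0:ℝ)..1, B x y * (|μ x y z| * |ν x y z|) := by
      refine imono (((hAc.comp (continuous_const.prodMk (continuous_const.prodMk
          continuous_id))).mul (hμsl x y)).mul (hνsl x y)).abs
        (continuous_const.mul ((hμsl x y).abs.mul (hνsl x y).abs)) (fun z hz => ?_)
      show |A x y z * μ x y z * ν x y z| ≤ _
      rw [abs_mul, abs_mul, mul_assoc]
      exact mul_le_mul_of_nonneg_right (hAB x y z hz)
        (mul_nonneg (abs_nonneg _) (abs_nonneg _))
    have h3 : (∫ z in (0:ℝ)..1, B x y * (|μ x y z| * |ν x y z|))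
        = B x y * ∫ z in (0:ℝ)..1, |μ x y z| * |ν x y z| :=
      intervalIntegral.integral_const_mul _ _
    have h4 : (∫ z in (0:ℝ)..1, |μ x y z| * |ν x y z|)
        ≤ Real.sqrt (mμ x y) * Real.sqrt (mν x y) := cs1 (hμsl x y) (hνsl x y)
    calc |∫ z in (0:ℝ)..1, Φ x y z| ≤ ∫ z in (0:ℝ)..1, |Φ x y z| := h1
      _ ≤ ∫ z in (0:ℝ)..1, B x y * (|μ x y z| * |ν x y z|) := h2
      _ = B x y * ∫ z in (0:ℝ)..1, |μ x y z| * |ν x y z| := h3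
      _ ≤ B x y * (Real.sqrt (mμ x y) * Real.sqrt (mν x y)) :=
          mul_le_mul_of_nonneg_left h4 (hB0 x y)
  -- step 2 : bound the triple integral by ∫∫ Ψ
  have step2 : |∫ x in (0:ℝ)..1, ∫ y in (0:ℝ)..1, ∫ z in (0:ℝ)..1, Φ x y z|
      ≤ ∫ x in (0:ℝ)..1, ∫ y in (0:ℝ)..1, Ψ x y := by
    have h1 : |∫ x in (0:ℝ)..1, ∫ y in (0:ℝ)..1, ∫ z in (0:ℝ)..1, Φ x y z|
        ≤ ∫ x in (0:ℝ)..1, |∫ y in (0:ℝ)..1, ∫ z in (0:ℝ)..1, Φ x y z| :=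
      intervalIntegral.abs_integral_le_integral_abs zero_le_one
    refine h1.trans (imono (cont2 (cont3 hΦc)).abs (cont2 hΨc) (fun x _ => ?_))
    have h2 : |∫ y in (0:ℝ)..1, ∫ z in (0:ℝ)..1, Φ x y z|
        ≤ ∫ y in (0:ℝ)..1, |∫ z in (0:ℝ)..1, Φ x y z| :=
      intervalIntegral.abs_integral_le_integral_abs zero_le_one
    refine h2.trans (imono (cslice (f := fun x y => ∫ z in (0:ℝ)..1, Φ x y z)
      (cont3 hΦc) x).abs (cslice hΨc x) (fun y _ => step1 x y))
  -- step 3 : Cauchy–Schwarz in (x,y)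
  have step3 : (∫ x in (0:ℝ)..1, ∫ y in (0:ℝ)..1, Ψ x y)
      ≤ L2 g * Real.sqrt (∫ x in (0:ℝ)..1, ∫ y in (0:ℝ)..1, mμ x y * mν x y) := by
    have e0 : ∀ x y : ℝ, Ψ x y = |B x y| * |Real.sqrt (mμ x y * mν x y)| := by
      intro x y
      rw [hΨ_def]
      show B x y * (Real.sqrt (mμ x y) * Real.sqrt (mν x y)) = _
      rw [← Real.sqrt_mul (hmμ0 x y), abs_of_nonneg (hB0 x y),
        abs_of_nonneg (Real.sqrt_nonneg _)]
    have ecc : (∫ x in (0:ℝ)..1, ∫ y in (0:ℝ)..1, Ψ x y)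
        = ∫ x in (0:ℝ)..1, ∫ y in (0:ℝ)..1,
            |B x y| * |Real.sqrt (mμ x y * mν x y)| := by
      refine intervalIntegral.integral_congr (μ := volume) (fun x _ => ?_)
      exact intervalIntegral.integral_congr (μ := volume) (fun y _ => e0 x y)
    rw [ecc]
    have hcs := cs2 (f := B) (g := fun x y => Real.sqrt (mμ x y * mν x y)) hBc
      (Real.continuous_sqrt.comp (hmμc.mul hmνc))
    refine hcs.trans ?_
    have e1 : (∫ x in (0:ℝ)..1, ∫ y in (0:ℝ)..1, B x y ^ 2)
        = ∫ x in (0:ℝ)..1, ∫ y in (0:ℝ)..1, ∫ z in (0:ℝ)..1, g x y z ^ 2 := by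
      refine intervalIntegral.integral_congr (μ := volume) (fun x _ => ?_)
      refine intervalIntegral.integral_congr (μ := volume) (fun y _ => ?_)
      rw [hB_def]
      exact Real.sq_sqrt (intervalIntegral.integral_nonneg zero_le_one fun z _ => sq_nonneg _)
    have e2 : (∫ x in (0:ℝ)..1, ∫ y in (0:ℝ)..1, Real.sqrt (mμ x y * mν x y) ^ 2)
        = ∫ x in (0:ℝ)..1, ∫ y in (0:ℝ)..1, mμ x y * mν x y := by
      refine intervalIntegral.integral_congr (μ := volume) (fun x _ => ?_)
      refine intervalIntegral.integral_congr (μ := volume) (fun y _ => ?_)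
      exact Real.sq_sqrt (mul_nonneg (hmμ0 x y) (hmν0 x y))
    rw [e1, e2]
    have : Real.sqrt (∫ x in (0:ℝ)..1, ∫ y in (0:ℝ)..1, ∫ z in (0:ℝ)..1, g x y z ^ 2)
        = L2 g := by rw [L2, I3]
    rw [this]
  -- step 4 : bound ∫∫ mμ mν
  have step4 : (∫ x in (0:ℝ)..1, ∫ y in (0:ℝ)..1, mμ x y * mν x y)
      ≤ (L2 μ * (L2 μ + 2 * gradL2 μ)) * (L2 ν * (L2 ν + 2 * gradL2 ν)) := by
    have ecc : (∫ x in (0:ℝ)..1, ∫ y in (0:ℝ)..1, mμ x y * mν x y)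
        = ∫ x in (0:ℝ)..1, ∫ y in (0:ℝ)..1, |mμ x y| * |mν x y| := by
      refine intervalIntegral.integral_congr (μ := volume) (fun x _ => ?_)
      refine intervalIntegral.integral_congr (μ := volume) (fun y _ => ?_)
      rw [abs_of_nonneg (hmμ0 x y), abs_of_nonneg (hmν0 x y)]
    rw [ecc]
    have hcs := cs2 (f := mμ) (g := mν) hmμc hmνc
    refine hcs.trans ?_
    refine mul_le_mul (mnorm_bound hμ) (mnorm_bound hν) (Real.sqrt_nonneg _) ?_
    have := L2_nonneg μ; have := gradL2_nonneg μ
    positivity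
  -- assemble
  have hL2g : 0 ≤ L2 g := L2_nonneg g
  have main : |∫ x in (0:ℝ)..1, ∫ y in (0:ℝ)..1, ∫ z in (0:ℝ)..1, Φ x y z|
      ≤ L2 g * Real.sqrt ((L2 μ * (L2 μ + 2 * gradL2 μ))
          * (L2 ν * (L2 ν + 2 * gradL2 ν))) := by
    refine (step2.trans step3).trans ?_
    exact mul_le_mul_of_nonneg_left
      (Real.sqrt_le_sqrt step4) hL2g
  have harith := sqrtQQ (L2_nonneg μ) (gradL2_nonneg μ) (L2_nonneg ν) (gradL2_nonneg ν)
  have final : |∫ x in (0:ℝ)..1, ∫ y in (0:ℝ)..1, ∫ z in (0:ℝ)..1, Φ x y z|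
      ≤ 2 * L2 g * Real.sqrt (L2 μ) * (Real.sqrt (L2 μ) + Real.sqrt (gradL2 μ))
        * Real.sqrt (L2 ν) * (Real.sqrt (L2 ν) + Real.sqrt (gradL2 ν)) := by
    refine main.trans ?_
    calc L2 g * Real.sqrt ((L2 μ * (L2 μ + 2 * gradL2 μ)) * (L2 ν * (L2 ν + 2 * gradL2 ν)))
        ≤ L2 g * (2 * Real.sqrt (L2 μ) * (Real.sqrt (L2 μ) + Real.sqrt (gradL2 μ))
          * Real.sqrt (L2 ν) * (Real.sqrt (L2 ν) + Real.sqrt (gradL2 ν))) :=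
          mul_le_mul_of_nonneg_left harith hL2g
      _ = _ := by ring
  exact final
end
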